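/- arXiv:1102.1117 — 2 statements merged into one kernel-verified Lean document; each statement's English description precedes it below -/
import Mathlib

section
/- Let a and b be positive coprime integers. Then in the polynomial ring ℤ[X], the polynomial (X^a − 1)(X^b − 1) divides the polynomial (X^{ab} − 1)(X − 1). -/
open Polynomial

/-! Both sides factor into cyclotomic polynomials, `X ^ n - 1 = ∏_{d ∣ n} Φ_d`. Since `a` and `b`
are coprime, `Φ_1 = X - 1` is the only factor shared by `X ^ a - 1` and `X ^ b - 1`, and every other
`Φ_d` with `d ∣ a` or `d ∣ b` occurs once in `X ^ (a * b) - 1`. -/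

namespace Nat

theorem Coprime.divisors_inter_eq_singleton_one {a b : ℕ} (hab : a.Coprime b) (ha : a ≠ 0)
    (hb : b ≠ 0) : a.divisors ∩ b.divisors = {1} := by
  ext d
  simp only [Finset.mem_inter, mem_divisors, Finset.mem_singleton]
  constructor
  · rintro ⟨⟨hda, -⟩, hdb, -⟩
    exact eq_one_of_dvd_coprimes hab hda hdb
  · rintro rfl
    exact ⟨⟨one_dvd a, ha⟩, one_dvd b, hb⟩

theorem divisors_union_subset_divisors_mul {a b : ℕ} (ha : a ≠ 0) (hb : b ≠ 0) :
    a.divisors ∪ b.divisors ⊆ (a * b).divisors :=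
  Finset.union_subset (divisors_subset_of_dvd (mul_ne_zero ha hb) (dvd_mul_right a b))
    (divisors_subset_of_dvd (mul_ne_zero ha hb) (dvd_mul_left b a))

end Nat

namespace Polynomial

theorem X_pow_sub_one_mul_X_pow_sub_one_dvd (R : Type*) [CommRing R] {a b : ℕ}
    (hab : a.Coprime b) :
    ((X : R[X]) ^ a - 1) * (X ^ b - 1) ∣ (X ^ (a * b) - 1) * (X - 1) := by
  rcases a.eq_zero_or_pos with rfl | ha
  · simp
  rcases b.eq_zero_or_pos with rfl | hb
  · simp
  rw [← prod_cyclotomic_eq_X_pow_sub_one ha R, ← prod_cyclotomic_eq_X_pow_sub_one hb R,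
    ← prod_cyclotomic_eq_X_pow_sub_one (Nat.mul_pos ha hb) R, ← Finset.prod_union_inter,
    hab.divisors_inter_eq_singleton_one ha.ne' hb.ne', Finset.prod_singleton, cyclotomic_one]
  exact mul_dvd_mul_right (Finset.prod_dvd_prod_of_subset _ _ _
    (Nat.divisors_union_subset_divisors_mul ha.ne' hb.ne')) _

end Polynomial

theorem torus_knot_alexander_divisibility_general (a b : ℕ)
    (hab : Nat.Coprime a b) :
    ((X : ℤ[X]) ^ a - 1) * ((X : ℤ[X]) ^ b - 1) ∣
      ((X : ℤ[X]) ^ (a * b) - 1) * ((X : ℤ[X]) - 1) :=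
  X_pow_sub_one_mul_X_pow_sub_one_dvd ℤ hab

theorem torus_knot_alexander_divisibility (a b : ℕ) (ha : 0 < a) (hb : 0 < b)
    (hab : Nat.Coprime a b) :
    ((X : ℤ[X]) ^ a - 1) * ((X : ℤ[X]) ^ b - 1) ∣
      ((X : ℤ[X]) ^ (a * b) - 1) * ((X : ℤ[X]) - 1) :=
  torus_knot_alexander_divisibility_general a b hab
end

section
/- Let G be a group and let s₁, s₂, s₃ ∈ G satisfy the braid relations of the 4-strand braid group: s₁s₂s₁ = s₂s₁s₂, s₂s₃s₂ = s₃s₂s₃, and s₁s₃ = s₃s₁. Set w = s₂s₃s₁s₂. Then for every odd integer q and all integers p and m, the element w^q · (s₂s₃²s₂)^p · s₁^m is conjugate in G to the element (s₁s₂s₃)^4 · w^{q−2} · (s₂s₃²s₂)^p · s₁^{m−4}. -/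
/-!
Put `w = s₂s₃s₁s₂` and `t = s₂s₃²s₂`. The braid relations say that `w` swaps `s₁` and `s₃` under
conjugation, so `w²` commutes with both and every odd power of `w` swaps them; they also give
`(s₁s₂s₃)⁴ = s₁²s₃²w²` and that `t` commutes with `s₃`. Hence `x = w^q t^p s₁^(m-4)` satisfies
`x s₃² = s₁² x`, the right-hand side equals `s₃² x s₃²`, and cyclic permutation gives
`s₃² x s₃² ~ x s₃⁴ = s₁⁴ x ~ x s₁⁴`, which is the left-hand side.
-/

theorem isConj_mul_comm {G : Type*} [Group G] (a b : G) : IsConj (a * b) (b * a) :=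
  isConj_iff.2 ⟨b, by group⟩

theorem SemiconjBy.zpow_left_of_odd {G : Type*} [Group G] {w a b : G}
    (hab : SemiconjBy w a b) (hba : SemiconjBy w b a) {n : ℤ} (hn : Odd n) :
    SemiconjBy (w ^ n) a b := by
  obtain ⟨k, rfl⟩ := hn
  have hb : Commute (w ^ 2) b := by rw [sq]; exact hab.mul_left hba
  rw [zpow_add_one, zpow_mul, zpow_ofNat]
  exact SemiconjBy.mul_left (hb.zpow_left k) hab

section Braid

variable {M : Type*} [Monoid M] {s₁ s₂ s₃ : M}

theorem semiconjBy_s₁_s₃_of_braid (h12 : s₁ * s₂ * s₁ = s₂ * s₁ * s₂)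
    (h23 : s₂ * s₃ * s₂ = s₃ * s₂ * s₃) : SemiconjBy (s₂ * s₃ * s₁ * s₂) s₁ s₃ :=
  calc s₂ * s₃ * s₁ * s₂ * s₁ = s₂ * s₃ * (s₁ * s₂ * s₁) := by simp only [mul_assoc]
    _ = s₂ * s₃ * s₂ * (s₁ * s₂) := by rw [h12]; simp only [mul_assoc]
    _ = s₃ * (s₂ * s₃ * s₁ * s₂) := by rw [h23]; simp only [mul_assoc]

theorem semiconjBy_s₃_s₁_of_braid (h12 : s₁ * s₂ * s₁ = s₂ * s₁ * s₂)
    (h23 : s₂ * s₃ * s₂ = s₃ * s₂ * s₃) (h13 : s₁ * s₃ = s₃ * s₁) :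
    SemiconjBy (s₂ * s₃ * s₁ * s₂) s₃ s₁ :=
  calc s₂ * s₃ * s₁ * s₂ * s₃ = s₂ * (s₃ * s₁) * s₂ * s₃ := by simp only [mul_assoc]
    _ = s₂ * s₁ * (s₃ * s₂ * s₃) := by rw [← h13]; simp only [mul_assoc]
    _ = s₂ * s₁ * s₂ * (s₃ * s₂) := by rw [← h23]; simp only [mul_assoc]
    _ = s₁ * s₂ * (s₁ * s₃) * s₂ := by rw [← h12]; simp only [mul_assoc]
    _ = s₁ * (s₂ * s₃ * s₁ * s₂) := by rw [h13]; simp only [mul_assoc]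

theorem commute_mul_sq_mul_of_braid (h23 : s₂ * s₃ * s₂ = s₃ * s₂ * s₃) :
    Commute (s₂ * s₃ ^ 2 * s₂) s₃ :=
  calc s₂ * s₃ ^ 2 * s₂ * s₃ = s₂ * s₃ * (s₃ * s₂ * s₃) := by simp only [sq, mul_assoc]
    _ = s₂ * s₃ * s₂ * (s₃ * s₂) := by rw [← h23]; simp only [mul_assoc]
    _ = s₃ * s₂ * s₃ * (s₃ * s₂) := by rw [h23]
    _ = s₃ * (s₂ * s₃ ^ 2 * s₂) := by simp only [sq, mul_assoc]

theorem full_twist_eq_of_braid (h12 : s₁ * s₂ * s₁ = s₂ * s₁ * s₂)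
    (h23 : s₂ * s₃ * s₂ = s₃ * s₂ * s₃) (h13 : s₁ * s₃ = s₃ * s₁) :
    (s₁ * s₂ * s₃) ^ 4 = s₁ ^ 2 * s₃ ^ 2 * (s₂ * s₃ * s₁ * s₂) ^ 2 := by
  set w := s₂ * s₃ * s₁ * s₂
  have hw1 : w * s₁ = s₃ * w := semiconjBy_s₁_s₃_of_braid h12 h23
  have hw3 : w * s₃ = s₁ * w := semiconjBy_s₃_s₁_of_braid h12 h23 h13
  calc (s₁ * s₂ * s₃) ^ 4 = s₁ * (w * s₃) * (s₁ * (w * s₃)) := by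
        simp only [w, pow_succ, pow_zero, one_mul, mul_assoc]
    _ = s₁ * s₁ * (w * s₁) * s₁ * w := by rw [hw3]; simp only [mul_assoc]
    _ = s₁ * s₁ * s₃ * w * s₁ * w := by rw [hw1]; simp only [mul_assoc]
    _ = s₁ ^ 2 * s₃ ^ 2 * w ^ 2 := by rw [mul_assoc _ w s₁, hw1]; simp only [sq, mul_assoc]

end Braid

theorem braid_conjugate_full_twist_form {G : Type*} [Group G] (s₁ s₂ s₃ : G)
    (h12 : s₁ * s₂ * s₁ = s₂ * s₁ * s₂)
    (h23 : s₂ * s₃ * s₂ = s₃ * s₂ * s₃)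
    (h13 : s₁ * s₃ = s₃ * s₁)
    (q p m : ℤ) (hq : Odd q) :
    IsConj ((s₂ * s₃ * s₁ * s₂) ^ q * (s₂ * s₃ ^ 2 * s₂) ^ p * s₁ ^ m)
      ((s₁ * s₂ * s₃) ^ 4 * (s₂ * s₃ * s₁ * s₂) ^ (q - 2) *
        (s₂ * s₃ ^ 2 * s₂) ^ p * s₁ ^ (m - 4)) := by
  rw [full_twist_eq_of_braid h12 h23 h13]
  have hc13 : Commute s₁ s₃ := h13
  set w := s₂ * s₃ * s₁ * s₂
  set t := s₂ * s₃ ^ 2 * s₂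
  set x := w ^ q * t ^ p * s₁ ^ (m - 4)
  have hw : SemiconjBy (w ^ q) s₃ s₁ :=
    (semiconjBy_s₃_s₁_of_braid h12 h23 h13).zpow_left_of_odd
      (semiconjBy_s₁_s₃_of_braid h12 h23) hq
  have ht : Commute (t ^ p) (s₃ ^ 2) := ((commute_mul_sq_mul_of_braid h23).zpow_left p).pow_right 2
  have hx : SemiconjBy x (s₃ ^ 2) (s₁ ^ 2) :=
    ((hw.pow_right 2).mul_left ht).mul_left ((hc13.zpow_left (m - 4)).pow_right 2)
  have hlhs : w ^ q * t ^ p * s₁ ^ m = x * (s₁ ^ 2 * s₁ ^ 2) := by simp only [x]; group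
  have hrhs : s₁ ^ 2 * s₃ ^ 2 * w ^ 2 * w ^ (q - 2) * t ^ p * s₁ ^ (m - 4) =
      s₃ ^ 2 * (x * s₃ ^ 2) := by
    rw [hx.eq, ← mul_assoc, ← (hc13.pow_pow 2 2).eq]
    simp only [x]; group
  rw [hlhs, hrhs]
  refine (isConj_mul_comm _ _).trans ?_
  rw [← (hx.mul_right hx).eq, ← mul_assoc]
  exact isConj_mul_comm _ _
end
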